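/- Let k ≥ 1 and let v₀, v₁, …, v_{2k+1} be vectors in ℂ² satisfying det[v_j, v_{j+1}] = 1 for all 0 ≤ j ≤ 2k. For each 0 ≤ j ≤ 2k−1 set τ_j = det[v_j, v_{j+2}] and let M_j be the 2×2 matrix ((τ_j, 1), (−1, 0)). Then the ordered product M_{2k−1} · M_{2k−2} · … · M₁ · M₀ equals the 2×2 matrix whose entries are: (1,1) entry det[v₀, v_{2k+1}], (1,2) entry det[v₁, v_{2k+1}], (2,1) entry −det[v₀, v_{2k}], and (2,2) entry −det[v₁, v_{2k}]. (This is the explicit form of the fusion Stokes matrix M_{0,2k}, proved by induction on k.) -/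
import Mathlib


/-- `detC u w` is the determinant of the 2×2 matrix with columns `u` and `w`. -/
noncomputable def detC (u w : Fin 2 → ℂ) : ℂ :=
  Matrix.det !![u 0, w 0; u 1, w 1]

lemma detC_pluecker (u a b c : Fin 2 → ℂ) :
    detC u c * detC a b - detC u b * detC a c + detC u a * detC b c = 0 := by
  simp [detC, Matrix.det_fin_two_of]; ring

lemma detC_step (u a b c : Fin 2 → ℂ) (h1 : detC a b = 1) (h2 : detC b c = 1) :
    detC u c = detC a c * detC u b - detC u a := by
  have := detC_pluecker u a b c
  rw [h1, h2] at this
  linear_combination this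

lemma detC_self (u : Fin 2 → ℂ) : detC u u = 0 := by
  simp [detC, Matrix.det_fin_two_of]

lemma fusion_aux (n : ℕ) (hn : 1 ≤ n) (v : ℕ → Fin 2 → ℂ)
    (hdet : ∀ j ≤ n, detC (v j) (v (j + 1)) = 1) :
    (((List.range n).reverse.map
        (fun j => (!![detC (v j) (v (j + 2)), 1; -1, 0] :
          Matrix (Fin 2) (Fin 2) ℂ))).prod
      = !![detC (v 0) (v (n + 1)), detC (v 1) (v (n + 1));
           -(detC (v 0) (v n)), -(detC (v 1) (v n))]) := by
  induction n, hn using Nat.le_induction with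
  | base =>
      simp [List.range_succ, detC_self, hdet 0 (by norm_num), hdet 1 (by norm_num)]
  | succ n hn ih =>
      have ih' := ih (fun j hj => hdet j (by omega))
      rw [List.range_succ, List.reverse_append, List.map_append, List.prod_append]
      simp only [List.reverse_singleton, List.map_cons, List.map_nil,
        List.prod_cons, List.prod_nil, Matrix.mul_one, ih']
      have h1 := hdet n (by omega)
      have h2 := hdet (n + 1) (by omega)
      have e0 := detC_step (v 0) (v n) (v (n + 1)) (v (n + 2)) h1 h2
      have e1 := detC_step (v 1) (v n) (v (n + 1)) (v (n + 2)) h1 h2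
      ext i j
      fin_cases i <;> fin_cases j <;>
        simp [Matrix.mul_apply, Fin.sum_univ_two, e0, e1] <;> ring

/-- the explicit form of the fusion Stokes matrix `M_{0,2k}`:
the ordered product `M_{2k-1} ⋯ M₁ M₀` of the single-step Stokes matrices
`M_j = ((τ_j, 1), (-1, 0))`, `τ_j = det[v_j, v_{j+2}]`, equals
`((det[v₀, v_{2k+1}], det[v₁, v_{2k+1}]), (-det[v₀, v_{2k}], -det[v₁, v_{2k}]))`. -/
theorem fusion_stokes_matrix (k : ℕ) (hk : 1 ≤ k) (v : ℕ → Fin 2 → ℂ)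
    (hdet : ∀ j ≤ 2 * k, detC (v j) (v (j + 1)) = 1) :
    (((List.range (2 * k)).reverse.map
        (fun j => (!![detC (v j) (v (j + 2)), 1; -1, 0] :
          Matrix (Fin 2) (Fin 2) ℂ))).prod
      = !![detC (v 0) (v (2 * k + 1)), detC (v 1) (v (2 * k + 1));
           -(detC (v 0) (v (2 * k))), -(detC (v 1) (v (2 * k)))]) := by
  exact fusion_aux (2 * k) (by omega) v hdet
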